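/- Suppose the matrices M_1,…,M_r satisfy conditions (H0), (H1) and (H2). Let a, b ∈ A and n ∈ ℤ^r with n ≥ 0. Then there exists a word w ∈ W with σ(w) ≥ n (componentwise), o(w) = a and t(w) = b. -/

import Mathlib

open Matrix

variable {r : ℕ} {A : Type*}

/-- The `j`-th standard basis vector of `ℤ^r`. -/
def evec (r : ℕ) (j : Fin r) : Fin r → ℤ := fun i => if i = j then 1 else 0

/-- `w` represents a word of shape `m` (only its values on `[0,m]` matter):
`m ≥ 0` and the transition matrices are respected on the box `[0,m]`. -/
def IsWord (M : Fin r → Matrix A A ℤ) (m : Fin r → ℤ) (w : (Fin r → ℤ) → A) : Prop :=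
  0 ≤ m ∧ ∀ (l : Fin r → ℤ) (j : Fin r), 0 ≤ l → l + evec r j ≤ m →
    M j (w (l + evec r j)) (w l) = 1

/-- Two representing functions agree on the box `[0,m]`; this is equality of
words of shape `m`. -/
def AgreeOn (m : Fin r → ℤ) (w w' : (Fin r → ℤ) → A) : Prop :=
  ∀ l : Fin r → ℤ, 0 ≤ l → l ≤ m → w l = w' l

/-- The restriction `w|[k,k+n]`, as a word based at `0`: `(restrictW k w) i = w (i + k)`. -/
def restrictW (k : Fin r → ℤ) (w : (Fin r → ℤ) → A) : (Fin r → ℤ) → A :=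
  fun i => w (i + k)

/-- `w` (a word of shape `m`) is `p`-periodic: the translate `τ_p w`, given by
`(τ_p w)(x) = w (x - p)`, agrees with `w` on `[0,m] ∩ [p,p+m]`. -/
def IsPeriodic (p m : Fin r → ℤ) (w : (Fin r → ℤ) → A) : Prop :=
  ∀ x : Fin r → ℤ, 0 ≤ x → x ≤ m → p ≤ x → x ≤ p + m → w (x - p) = w x

/-- Condition (H0): each `M j` is nonzero. -/
def H0 (M : Fin r → Matrix A A ℤ) : Prop := ∀ j, M j ≠ 0

/-- Condition (H1): unique products of words. -/
def H1 (M : Fin r → Matrix A A ℤ) : Prop :=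
  ∀ (m n : Fin r → ℤ) (u v : (Fin r → ℤ) → A),
    IsWord M m u → IsWord M n v → u m = v 0 →
      (∃ w, IsWord M (m + n) w ∧ AgreeOn m w u ∧ AgreeOn n (restrictW m w) v) ∧
      (∀ w w', IsWord M (m + n) w → AgreeOn m w u → AgreeOn n (restrictW m w) v →
        IsWord M (m + n) w' → AgreeOn m w' u → AgreeOn n (restrictW m w') v →
        AgreeOn (m + n) w w')

/-- Condition (H2): the directed graph on `A` with an edge `a → b` whenever
`M i b a = 1` for some `i` is irreducible. -/
def H2 (M : Fin r → Matrix A A ℤ) : Prop :=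
  ∀ a b : A, Relation.ReflTransGen (fun x y => ∃ i, M i y x = 1) a b

/-- Condition (H3): for each nonzero `p ∈ ℤ^r` there is a non-`p`-periodic word. -/
def H3 (M : Fin r → Matrix A A ℤ) : Prop :=
  ∀ p : Fin r → ℤ, p ≠ 0 → ∃ (m : Fin r → ℤ) (w : (Fin r → ℤ) → A),
    IsWord M m w ∧ ¬ IsPeriodic p m w

/-- Condition (H1a): the matrices commute. -/
def H1a [Fintype A] (M : Fin r → Matrix A A ℤ) : Prop :=
  ∀ i j, M i * M j = M j * M i

/-- Condition (H1b): for `i < j`, the entries of `M i * M j` lie in `{0,1}`. -/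
def H1b [Fintype A] (M : Fin r → Matrix A A ℤ) : Prop :=
  ∀ i j, i < j → ∀ a b : A, (M i * M j) b a = 0 ∨ (M i * M j) b a = 1

/-- Condition (H1c): for `i < j < k`, the entries of `M i * M j * M k` lie in `{0,1}`. -/
def H1c [Fintype A] (M : Fin r → Matrix A A ℤ) : Prop :=
  ∀ i j k, i < j → j < k → ∀ a b : A,
    (M i * M j * M k) b a = 0 ∨ (M i * M j * M k) b a = 1

/-- Condition (H3*). -/
def H3star (M : Fin r → Matrix A A ℤ) : Prop :=
  ∀ (j : Fin r) (m : Fin r → ℤ), m j = 0 → ∀ w : (Fin r → ℤ) → A, IsWord M m w →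
    ∃ u u', IsWord M (m + evec r j) u ∧ IsWord M (m + evec r j) u' ∧
      AgreeOn m u w ∧ AgreeOn m u' w ∧ u (evec r j) ≠ u' (evec r j)

/-- `x` represents the product word `uv` of `u ∈ W_m` and `v ∈ W_n`. -/
def IsProd (M : Fin r → Matrix A A ℤ) (m n : Fin r → ℤ)
    (u v x : (Fin r → ℤ) → A) : Prop :=
  IsWord M (m + n) x ∧ AgreeOn m x u ∧ AgreeOn n (restrictW m x) v


/-!
By (H1), a word ending in `c` can be prolonged by one letter in direction `i` along
any edge `c → c'` of `M i`, so by (H2) it can be prolonged to end in any prescribed letter.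
By (H0) every `M j` has an edge; walking to its source and then taking it increases the shape in
direction `j`. Doing this repeatedly in every direction, starting from the one-letter word `a`, and
finally walking to `b`, gives the required word.
-/

section Evec

lemma evec_apply_self (j : Fin r) : evec r j j = 1 := if_pos rfl

lemma evec_apply_of_ne {i j : Fin r} (h : i ≠ j) : evec r j i = 0 := if_neg h

lemma evec_nonneg (j : Fin r) : 0 ≤ evec r j := fun i => by
  by_cases h : i = j <;> simp [evec, h]

lemma evec_ne_zero (j : Fin r) : evec r j ≠ 0 := fun h => by
  simpa [evec_apply_self] using congrFun h j

lemma le_add_evec (m : Fin r → ℤ) (j : Fin r) : m ≤ m + evec r j :=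
  le_add_of_nonneg_right (evec_nonneg j)

lemma eq_and_eq_zero_of_add_evec_le_evec {l : Fin r → ℤ} {i j : Fin r} (hl : 0 ≤ l)
    (h : l + evec r j ≤ evec r i) : j = i ∧ l = 0 := by
  have hji : j = i := by
    by_contra hne
    have := h j
    simp only [Pi.add_apply, evec_apply_self, evec_apply_of_ne hne] at this
    linarith [show (0 : ℤ) ≤ l j from hl j]
  subst hji
  refine ⟨rfl, funext fun k => le_antisymm ?_ (hl k)⟩
  have := h k
  simp only [Pi.add_apply] at this
  simpa using this

end Evec

section Words

variable {M : Fin r → Matrix A A ℤ}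

lemma isWord_zero_const (M : Fin r → Matrix A A ℤ) (a : A) : IsWord M 0 (fun _ => a) := by
  refine ⟨le_rfl, fun l j hl hle => absurd (hle j) ?_⟩
  simp only [Pi.add_apply, evec_apply_self, Pi.zero_apply, not_le]
  linarith [show (0 : ℤ) ≤ l j from hl j]

lemma isWord_evec_of_eq_one {i : Fin r} {c c' : A} (h : M i c' c = 1) :
    IsWord M (evec r i) (fun x => if x = 0 then c else c') := by
  refine ⟨evec_nonneg i, fun l j hl hle => ?_⟩
  obtain ⟨rfl, rfl⟩ := eq_and_eq_zero_of_add_evec_le_evec hl hle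
  simpa [evec_ne_zero] using h

lemma H0.exists_eq_one (hM : ∀ j (a b : A), M j b a = 0 ∨ M j b a = 1) (h0 : H0 M) (j : Fin r) :
    ∃ c c' : A, M j c' c = 1 := by
  by_contra! h
  exact h0 j <| Matrix.ext fun c' c => (hM j c c').resolve_right (h c c')

-- `w'` is the (H1)-product of `w` with the two-letter word `(w m) c'` of shape `e_i`.
lemma IsWord.exists_append_letter (h1 : H1 M) {m : Fin r → ℤ} {w : (Fin r → ℤ) → A}
    (hw : IsWord M m w) {i : Fin r} {c' : A} (h : M i c' (w m) = 1) :
    ∃ w', IsWord M (m + evec r i) w' ∧ w' 0 = w 0 ∧ w' (m + evec r i) = c' := by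
  obtain ⟨w', hw', hw'w, hw'v⟩ :=
    (h1 m (evec r i) w _ hw (isWord_evec_of_eq_one h) (if_pos rfl).symm).1
  refine ⟨w', hw', hw'w 0 le_rfl hw.1, ?_⟩
  have := hw'v (evec r i) (evec_nonneg i) le_rfl
  simpa [restrictW, add_comm, evec_ne_zero] using this

lemma IsWord.exists_extend_to (h1 : H1 M) {c d : A}
    (hcd : Relation.ReflTransGen (fun x y => ∃ i, M i y x = 1) c d)
    {m : Fin r → ℤ} {w : (Fin r → ℤ) → A} (hw : IsWord M m w) (hc : w m = c) :
    ∃ m' w', m ≤ m' ∧ IsWord M m' w' ∧ w' 0 = w 0 ∧ w' m' = d := by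
  induction hcd with
  | refl => exact ⟨m, w, le_rfl, hw, rfl, hc⟩
  | tail _ hedge ih =>
    obtain ⟨m', w', hmm', hw', hw'0, hw'c⟩ := ih
    obtain ⟨i, hi⟩ := hedge
    obtain ⟨w'', hw'', hw''0, hw''d⟩ := hw'.exists_append_letter h1 (hw'c ▸ hi)
    exact ⟨m' + evec r i, w'', hmm'.trans (le_add_evec m' i), hw'', hw''0.trans hw'0, hw''d⟩

variable (hM : ∀ j (a b : A), M j b a = 0 ∨ M j b a = 1) (h0 : H0 M) (h1 : H1 M) (h2 : H2 M)
include hM h0 h1 h2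

lemma IsWord.exists_grow (j : Fin r) {m : Fin r → ℤ} {w : (Fin r → ℤ) → A}
    (hw : IsWord M m w) :
    ∃ m' w', m ≤ m' ∧ m j < m' j ∧ IsWord M m' w' ∧ w' 0 = w 0 := by
  obtain ⟨c, c', hcc'⟩ := h0.exists_eq_one hM j
  obtain ⟨m₁, w₁, hmm₁, hw₁, hw₁0, hw₁c⟩ := hw.exists_extend_to h1 (h2 (w m) c) rfl
  obtain ⟨w₂, hw₂, hw₂0, -⟩ := hw₁.exists_append_letter h1 (hw₁c ▸ hcc')
  refine ⟨m₁ + evec r j, w₂, hmm₁.trans (le_add_evec m₁ j), ?_, hw₂, hw₂0.trans hw₁0⟩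
  simpa [evec_apply_self] using (hmm₁ j).trans_lt (lt_add_one (m₁ j))

lemma IsWord.exists_grow_to (j : Fin r) {m : Fin r → ℤ} {w : (Fin r → ℤ) → A}
    (hw : IsWord M m w) (k : ℤ) :
    ∃ m' w', m ≤ m' ∧ k ≤ m' j ∧ IsWord M m' w' ∧ w' 0 = w 0 := by
  suffices ∀ k, m j ≤ k → ∃ m' w', m ≤ m' ∧ k ≤ m' j ∧ IsWord M m' w' ∧ w' 0 = w 0 by
    obtain ⟨m', w', hmm', hk, hw'⟩ := this (max k (m j)) (le_max_right _ _)
    exact ⟨m', w', hmm', (le_max_left _ _).trans hk, hw'⟩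
  refine Int.leInduction ⟨m, w, le_rfl, le_rfl, hw, rfl⟩ fun k _ ih => ?_
  obtain ⟨m₁, w₁, hmm₁, hk₁, hw₁, hw₁0⟩ := ih
  obtain ⟨m₂, w₂, hm₁m₂, hlt, hw₂, hw₂0⟩ := hw₁.exists_grow hM h0 h1 h2 j
  exact ⟨m₂, w₂, hmm₁.trans hm₁m₂, by omega, hw₂, hw₂0.trans hw₁0⟩

lemma exists_isWord_shape_ge (a : A) (n : Fin r → ℤ) :
    ∃ m w, n ≤ m ∧ IsWord M m w ∧ w 0 = a := by
  suffices ∀ s : Finset (Fin r), ∃ m w, (∀ j ∈ s, n j ≤ m j) ∧ IsWord M m w ∧ w 0 = a by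
    obtain ⟨m, w, hnm, hw⟩ := this Finset.univ
    exact ⟨m, w, fun j => hnm j (Finset.mem_univ j), hw⟩
  intro s
  induction s using Finset.induction with
  | empty => exact ⟨0, fun _ => a, by simp, isWord_zero_const M a, rfl⟩
  | insert j s _ ih =>
    obtain ⟨m, w, hnm, hw, hw0⟩ := ih
    obtain ⟨m', w', hmm', hj, hw', hw'0⟩ := hw.exists_grow_to hM h0 h1 h2 j (n j)
    refine ⟨m', w', ?_, hw', hw'0.trans hw0⟩
    simp only [Finset.mem_insert, forall_eq_or_imp]
    exact ⟨hj, fun i hi => (hnm i hi).trans (hmm' i)⟩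

end Words

theorem stmt_6_general
    (M : Fin r → Matrix A A ℤ)
    (hM : ∀ j (a b : A), M j b a = 0 ∨ M j b a = 1)
    (h0 : H0 M) (h1 : H1 M) (h2 : H2 M)
    (a b : A) (n : Fin r → ℤ) :
    ∃ (m : Fin r → ℤ) (w : (Fin r → ℤ) → A),
      n ≤ m ∧ IsWord M m w ∧ w 0 = a ∧ w m = b := by
  obtain ⟨m, w, hnm, hw, hw0⟩ := exists_isWord_shape_ge hM h0 h1 h2 a n
  obtain ⟨m', w', hmm', hw', hw'0, hw'b⟩ := hw.exists_extend_to h1 (h2 (w m) b) rfl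
  exact ⟨m', w', hnm.trans hmm', hw', hw'0.trans hw0, hw'b⟩

/-- under (H0), (H1), (H2), for all `a, b ∈ A` and `n ≥ 0` there
is a word `w` with shape `≥ n`, `o(w) = a` and `t(w) = b`. -/
theorem stmt_6 [Fintype A] [Nonempty A] (hr : 0 < r)
    (M : Fin r → Matrix A A ℤ)
    (hM : ∀ j (a b : A), M j b a = 0 ∨ M j b a = 1)
    (h0 : H0 M) (h1 : H1 M) (h2 : H2 M)
    (a b : A) (n : Fin r → ℤ) (hn : 0 ≤ n) :
    ∃ (m : Fin r → ℤ) (w : (Fin r → ℤ) → A),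
      n ≤ m ∧ IsWord M m w ∧ w 0 = a ∧ w m = b :=
  stmt_6_general M hM h0 h1 h2 a b n
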